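/- For t > 0 and x ∈ ℝ^d, the value |x|²/(2t) equals the supremum over all pairs (a,b) ∈ ℝ × ℝ^d with a + |b|²/2 ≤ 0 of the quantity a·t + b·x. In other words, Ψ(t,x) = sup{ a t + ⟨b,x⟩ : a + |b|²/2 ≤ 0 } for t > 0. -/

import Mathlib

/-!
Weighted Young: `⟪b, x⟫ ≤ t‖b‖²/2 + ‖x‖²/(2t)`, so under `a + ‖b‖²/2 ≤ 0` every `a t + ⟪b, x⟫`
is at most `‖x‖²/(2t)`; equality holds for `b = x / t`, `a = -‖b‖²/2`.
-/

open scoped RealInnerProductSpace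

section

variable {E : Type*} [NormedAddCommGroup E] [InnerProductSpace ℝ E]

theorem real_inner_le_mul_norm_sq_div_two_add {t : ℝ} (ht : 0 < t) (b x : E) :
    ⟪b, x⟫ ≤ t * ‖b‖ ^ 2 / 2 + ‖x‖ ^ 2 / (2 * t) := by
  have cauchy_schwarz : ⟪b, x⟫ ≤ ‖b‖ * ‖x‖ := real_inner_le_norm b x
  have am_gm : 2 * t * (‖b‖ * ‖x‖) ≤ t ^ 2 * ‖b‖ ^ 2 + ‖x‖ ^ 2 := by
    nlinarith [sq_nonneg (t * ‖b‖ - ‖x‖)]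
  have key : ‖b‖ * ‖x‖ ≤ t * ‖b‖ ^ 2 / 2 + ‖x‖ ^ 2 / (2 * t) := by
    rw [div_add_div _ _ two_ne_zero (by positivity), le_div_iff₀ (by positivity)]
    nlinarith
  exact cauchy_schwarz.trans key

theorem isGreatest_mul_add_real_inner {t : ℝ} (ht : 0 < t) (x : E) :
    IsGreatest {y : ℝ | ∃ a : ℝ, ∃ b : E, a + ‖b‖ ^ 2 / 2 ≤ 0 ∧ y = a * t + ⟪b, x⟫}
      (‖x‖ ^ 2 / (2 * t)) := by
  constructor
  · refine ⟨-(‖t⁻¹ • x‖ ^ 2 / 2), t⁻¹ • x, by simp, ?_⟩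
    rw [norm_smul, Real.norm_of_nonneg (inv_nonneg.mpr ht.le), real_inner_smul_left,
      real_inner_self_eq_norm_sq]
    field_simp
    ring
  · rintro y ⟨a, b, hab, rfl⟩
    have := real_inner_le_mul_norm_sq_div_two_add ht b x
    nlinarith

end

/-- Duality formula for the Benamou–Brenier integrand: for `t > 0`,
`|x|²/(2t) = sup { a t + ⟨b, x⟩ : a + |b|²/2 ≤ 0 }`. -/
theorem Psi_duality {d : ℕ} (t : ℝ) (ht : 0 < t) (x : EuclideanSpace ℝ (Fin d)) :
    ‖x‖ ^ 2 / (2 * t) =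
      sSup {y : ℝ | ∃ a : ℝ, ∃ b : EuclideanSpace ℝ (Fin d),
        a + ‖b‖ ^ 2 / 2 ≤ 0 ∧ y = a * t + ⟪b, x⟫} :=
  (isGreatest_mul_add_real_inner ht x).csSup_eq.symm
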